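/- (Laplace-domain boundary condition.) Let k_f, k_b, k_d ≥ 0, s > 0, r0 > 1, and set x = √(s + k_d). Define q = [ (4π·x − 4π − k_f·s/(s + k_b)) / (4π·x + 4π + k_f·s/(s + k_b)) ] · exp(−x·(r0 − 2)) / (8π·r0·x), and for 0 < r ≤ r0 define P̄(r) = exp(−x·(r0 − r))/(8π·r·r0·x) + (q/r)·exp(−x·r). Then P̄ satisfies the radiation boundary condition dP̄/dr(1) = ( k_f·s / (4π·(s + k_b)) )·P̄(1). -/

import Mathlib

/-- The constant `q` of the Laplace-domain Green's function (Eq. (62) of the paper), with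
`x = √(s + k_d)`:
`q = [(4π·x − 4π − k_f·s/(s+k_b)) / (4π·x + 4π + k_f·s/(s+k_b))]·exp(−x·(r0−2))/(8π·r0·x)`. -/
noncomputable def qConst (k_f k_b k_d s r0 : ℝ) : ℝ :=
  ((4 * Real.pi * Real.sqrt (s + k_d) - 4 * Real.pi - k_f * s / (s + k_b))
      / (4 * Real.pi * Real.sqrt (s + k_d) + 4 * Real.pi + k_f * s / (s + k_b)))
    * Real.exp (-Real.sqrt (s + k_d) * (r0 - 2)) / (8 * Real.pi * r0 * Real.sqrt (s + k_d))

/-- The Laplace-domain Green's function in the region `0 < r ≤ r0`, with `x = √(s + k_d)`: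
`P̄(r) = exp(−x·(r0 − r))/(8π·r·r0·x) + (q/r)·exp(−x·r)`. -/
noncomputable def laplaceGreenInner (k_f k_b k_d s r0 : ℝ) (r : ℝ) : ℝ :=
  Real.exp (-Real.sqrt (s + k_d) * (r0 - r)) / (8 * Real.pi * r * r0 * Real.sqrt (s + k_d))
    + (qConst k_f k_b k_d s r0 / r) * Real.exp (-Real.sqrt (s + k_d) * r)

/-! Inside `r0`, `P̄(r)` is a combination `(A·e^{x r} + q·e^{-x r})/r` with `A = e^{-x r0}/(8π r0 x)`.
The Robin condition `P̄'(1) = κ·P̄(1)` is linear in the two coefficients and holds exactly when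
`q·(x + 1 + κ) = A·e^{2x}·(x - 1 - κ)`, which is how `q` is chosen; for `κ ≥ 0` the factor
`x + 1 + κ` is positive, so the division in `q` is genuine. -/

open Real

/-- Radial solutions `(A·e^{x r} + B·e^{-x r})/r` of `Δu = x²·u` in three dimensions. -/
noncomputable def radialProfile (A B x r : ℝ) : ℝ :=
  (A * exp (x * r) + B * exp (-(x * r))) / r

theorem hasDerivAt_radialProfile (A B x : ℝ) {r : ℝ} (hr : r ≠ 0) :
    HasDerivAt (radialProfile A B x)
      ((A * exp (x * r) * (x * r - 1) - B * exp (-(x * r)) * (x * r + 1)) / r ^ 2) r := by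
  have hsum : HasDerivAt (fun t => A * exp (x * t) + B * exp (-(x * t)))
      (A * (exp (x * r) * x) + B * (exp (-(x * r)) * -x)) r := by
    have hlin : HasDerivAt (fun t => x * t) x r := by simpa using (hasDerivAt_id r).const_mul x
    exact (hlin.exp.const_mul A).add (hlin.neg.exp.const_mul B)
  exact (hsum.div (hasDerivAt_id' r) hr).congr_deriv (by ring)

theorem deriv_radialProfile_one_eq_mul {A B x κ : ℝ}
    (hB : B * (x + 1 + κ) = A * exp (2 * x) * (x - 1 - κ)) :
    deriv (radialProfile A B x) 1 = κ * radialProfile A B x 1 := by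
  have hexp : exp (2 * x) = exp x * exp x := by rw [← exp_add, two_mul]
  have hinv : exp x * exp (-x) = 1 := by rw [← exp_add, add_neg_cancel, exp_zero]
  rw [(hasDerivAt_radialProfile A B x one_ne_zero).deriv]
  simp only [radialProfile, mul_one, one_pow, div_one]
  linear_combination (-exp (-x)) * hB - A * exp x * (x - 1 - κ) * hinv
    - A * (x - 1 - κ) * exp (-x) * hexp

theorem laplaceGreenInner_eq_radialProfile (k_f k_b k_d s r0 : ℝ) :
    laplaceGreenInner k_f k_b k_d s r0
      = radialProfile (exp (-(√(s + k_d) * r0)) / (8 * π * r0 * √(s + k_d)))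
          (qConst k_f k_b k_d s r0) √(s + k_d) := by
  funext r
  have hexp : exp (-√(s + k_d) * (r0 - r)) = exp (-(√(s + k_d) * r0)) * exp (√(s + k_d) * r) := by
    rw [← exp_add]; congr 1; ring
  rw [laplaceGreenInner, radialProfile, hexp, neg_mul]
  ring

theorem qConst_mul_eq (k_f k_b k_d s r0 : ℝ) (hkf : 0 ≤ k_f) (hkb : 0 ≤ k_b) (hs : 0 < s) :
    qConst k_f k_b k_d s r0 * (√(s + k_d) + 1 + k_f * s / (4 * π * (s + k_b)))
      = exp (-(√(s + k_d) * r0)) / (8 * π * r0 * √(s + k_d)) * exp (2 * √(s + k_d))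
          * (√(s + k_d) - 1 - k_f * s / (4 * π * (s + k_b))) := by
  unfold qConst
  set x := √(s + k_d)
  set c := k_f * s / (s + k_b) with hc
  have hκ : k_f * s / (4 * π * (s + k_b)) = c / (4 * π) := by rw [hc, div_div, mul_comm (s + k_b)]
  have hden : 0 < 4 * π * x + 4 * π + c := by positivity
  have hexp : exp (-x * (r0 - 2)) = exp (-(x * r0)) * exp (2 * x) := by
    rw [← exp_add]; congr 1; ring
  have hratio : (4 * π * x - 4 * π - c) / (4 * π * x + 4 * π + c) * (x + 1 + c / (4 * π))
      = x - 1 - c / (4 * π) := by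
    rw [div_mul_eq_mul_div, div_eq_iff hden.ne']
    field_simp
  rw [hκ, hexp]
  linear_combination exp (-(x * r0)) * exp (2 * x) / (8 * π * r0 * x) * hratio

theorem laplaceGreenInner_satisfies_boundary_condition_general
    (k_f k_b k_d s r0 : ℝ) (hkf : 0 ≤ k_f) (hkb : 0 ≤ k_b)
    (hs : 0 < s) :
    deriv (laplaceGreenInner k_f k_b k_d s r0) 1
      = (k_f * s / (4 * Real.pi * (s + k_b))) * laplaceGreenInner k_f k_b k_d s r0 1 := by
  rw [laplaceGreenInner_eq_radialProfile]
  exact deriv_radialProfile_one_eq_mul (qConst_mul_eq k_f k_b k_d s r0 hkf hkb hs)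

/-- (Laplace-domain boundary condition.) For `k_f, k_b, k_d ≥ 0`, `s > 0`, and `r0 > 1`, the
Laplace-domain Green's function `P̄` satisfies the radiation boundary condition
`dP̄/dr(1) = (k_f·s/(4π·(s+k_b)))·P̄(1)` at the receiver surface. -/
theorem laplaceGreenInner_satisfies_boundary_condition
    (k_f k_b k_d s r0 : ℝ) (hkf : 0 ≤ k_f) (hkb : 0 ≤ k_b) (hkd : 0 ≤ k_d)
    (hs : 0 < s) (hr0 : 1 < r0) :
    deriv (laplaceGreenInner k_f k_b k_d s r0) 1
      = (k_f * s / (4 * Real.pi * (s + k_b))) * laplaceGreenInner k_f k_b k_d s r0 1 :=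
  laplaceGreenInner_satisfies_boundary_condition_general k_f k_b k_d s r0 hkf hkb hs
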